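/- arXiv:2109.09398 — 2 statements merged into one kernel-verified Lean document; each statement's English description precedes it below -/
import Mathlib

section
/- For a fixed positive integer m and a complex number s with Re(s) > 1, the Dirichlet series ∑_{n=1}^{∞} c_n(m)/n^s converges and equals σ_{1-s}(m)/ζ(s), where c_n(m) = ∑_{d | gcd(m,n)} d·μ(n/d), σ_{1-s}(m) = ∑_{d | m} d^{1-s}, and ζ is the Riemann zeta function. -/
open Complex

/-- The Ramanujan sum `c_n(m) = ∑_{d | gcd(m,n)} d·μ(n/d)`. -/
noncomputable def ramanujanC (n m : ℕ) : ℂ :=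
  ∑ d ∈ (Nat.gcd m n).divisors, (d : ℂ) * (ArithmeticFunction.moebius (n / d) : ℤ)

/-- `σ_z(m) = ∑_{d | m} d^z`. -/
noncomputable def sigmaz (z : ℂ) (m : ℕ) : ℂ :=
  ∑ d ∈ m.divisors, (d : ℂ) ^ z

/-!
Writing `c_n(m) = ∑_{d ∣ m, d ∣ n} d·μ(n/d)` and swapping the finite sum over `d ∣ m` with the
sum over `n`, the `d`-th series runs over the multiples `n = d k` only and is
`d · d^{-s} · ∑_k μ(k)/k^s = d^{1-s}/ζ(s)`.
-/

open ArithmeticFunction in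
theorem hasSum_moebius_div_cpow {s : ℂ} (hs : 1 < s.re) :
    HasSum (fun n : ℕ => (moebius n : ℂ) / (n : ℂ) ^ s) (riemannZeta s)⁻¹ := by
  have hL : LSeries (fun n => (moebius n : ℂ)) s = (riemannZeta s)⁻¹ := by
    rw [← LSeries_one_eq_riemannZeta hs]
    exact eq_inv_of_mul_eq_one_right (LSeries_one_mul_Lseries_moebius hs)
  rw [← hL, ← funext (LSeries.term_of_ne_zero' (ne_zero_of_one_lt_re hs) _)]
  exact (LSeriesSummable_moebius_iff.mpr hs).LSeriesHasSum

theorem HasSum.ite_dvd_div_cpow {f : ℕ → ℂ} {s a : ℂ}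
    (h : HasSum (fun k : ℕ => f k / (k : ℂ) ^ s) a) {d : ℕ} (hd : d ≠ 0) :
    HasSum (fun n : ℕ => if d ∣ n then f (n / d) / (n : ℂ) ^ s else 0) ((d : ℂ) ^ (-s) * a) := by
  have hmultiples : (fun n : ℕ => if d ∣ n then f (n / d) / (n : ℂ) ^ s else 0) ∘ (d * ·) =
      fun k => (d : ℂ) ^ (-s) * (f k / (k : ℂ) ^ s) := by
    funext k
    simp only [Function.comp_apply, dvd_mul_right, if_true, Nat.mul_div_cancel_left _
      (Nat.pos_of_ne_zero hd), Nat.cast_mul, natCast_mul_natCast_cpow, cpow_neg]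
    ring
  exact ((mul_right_injective₀ hd).hasSum_iff fun n hn => if_neg fun ⟨k, hk⟩ => hn ⟨k, hk.symm⟩).mp
    (hmultiples ▸ h.mul_left _)

theorem Nat.divisors_gcd_eq_filter_dvd {m : ℕ} (hm : m ≠ 0) (n : ℕ) :
    (m.gcd n).divisors = m.divisors.filter (· ∣ n) := by
  ext d
  simp only [Finset.mem_filter, Nat.mem_divisors, Nat.dvd_gcd_iff, Nat.gcd_ne_zero_left hm,
    hm, ne_eq, not_false_eq_true, and_true]

theorem ramanujanC_div_cpow {m : ℕ} (hm : m ≠ 0) (n : ℕ) (s : ℂ) :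
    ramanujanC n m / (n : ℂ) ^ s = ∑ d ∈ m.divisors,
      (d : ℂ) * if d ∣ n then (ArithmeticFunction.moebius (n / d) : ℂ) / (n : ℂ) ^ s else 0 := by
  rw [ramanujanC, Nat.divisors_gcd_eq_filter_dvd hm, Finset.sum_filter, Finset.sum_div]
  refine Finset.sum_congr rfl fun d _ => ?_
  split_ifs <;> simp [mul_div_assoc]

/-- For `Re(s) > 1`, `∑_{n ≥ 1} c_n(m)/n^s` converges to `σ_{1-s}(m)/ζ(s)`. -/
theorem ramanujan_dirichlet_series (m : ℕ) (hm : 0 < m) (s : ℂ) (hs : 1 < s.re) :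
    HasSum (fun n : ℕ => ramanujanC n m / (n : ℂ) ^ s)
      (sigmaz (1 - s) m / riemannZeta s) := by
  have hdivisor : ∀ d ∈ m.divisors, HasSum
      (fun n : ℕ => (d : ℂ) * if d ∣ n then (ArithmeticFunction.moebius (n / d) : ℂ) / (n : ℂ) ^ s
        else 0) ((d : ℂ) * ((d : ℂ) ^ (-s) * (riemannZeta s)⁻¹)) := fun d hd =>
    ((hasSum_moebius_div_cpow hs).ite_dvd_div_cpow (Nat.pos_of_mem_divisors hd).ne').mul_left _
  convert hasSum_sum hdivisor using 1
  · exact funext fun n => ramanujanC_div_cpow hm.ne' n s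
  · rw [sigmaz, Finset.sum_div]
    refine Finset.sum_congr rfl fun d hd => ?_
    rw [cpow_sub _ _ (Nat.cast_ne_zero.mpr (Nat.pos_of_mem_divisors hd).ne'), cpow_one, cpow_neg]
    ring
end

section
/- Let K be a number field with ring of integers O_K. For a nonzero ideal I of O_K and complex s with Re(s) > 1, the Dirichlet series ∑_{J} C_J(I)/N(J)^s, summed over nonzero ideals J of O_K, converges absolutely and equals σ_{K,1−s}(I)/ζ_K(s), where σ_{K,1−s}(I) = ∑_{I₁ | I} N(I₁)^{1−s}. -/
open scoped Classical

open NumberField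

variable (K : Type*) [Field K] [NumberField K]

/-- The Möbius function on nonzero ideals of `𝓞 K`: `(−1)^r` on a product of `r`
distinct prime ideals, `0` if not squarefree. -/
noncomputable def idealMu (I : Ideal (𝓞 K)) : ℤ :=
  if Squarefree I then (-1) ^ Multiset.card (UniqueFactorizationMonoid.factors I) else 0

/-- `σ_{K,z}(I) = ∑_{I₁ | I} N(I₁)^z`. -/
noncomputable def sigmaK (z : ℂ) (I : Ideal (𝓞 K)) : ℂ :=
  ∑' I₁ : Ideal (𝓞 K), if I₁ ∣ I then (Ideal.absNorm I₁ : ℂ) ^ z else 0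

/-- The Dedekind zeta function `ζ_K(s) = ∑_{I ≠ 0} N(I)^{−s}`. -/
noncomputable def zetaK (s : ℂ) : ℂ :=
  ∑' I : {I : Ideal (𝓞 K) // I ≠ ⊥}, (Ideal.absNorm I.1 : ℂ) ^ (-s)

/-- The Ramanujan sum over `K`: `C_J(I) = ∑_{I₁ | J, I₁ | I} N(I₁)·μ(J/I₁)`,
written as a sum over factorizations `J = I₁·I₂`. -/
noncomputable def ramanujanCK (J I : Ideal (𝓞 K)) : ℂ :=
  ∑' p : Ideal (𝓞 K) × Ideal (𝓞 K),
    if p.1 * p.2 = J ∧ p.1 ∣ I then (Ideal.absNorm p.1 : ℂ) * (idealMu K p.2 : ℂ) else 0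

/-
With `g(D) = [D ∣ I] N(D)^{1-s}` and `m(E) = μ(E) N(E)^{-s}`, multiplicativity of the norm gives
`C_J(I) N(J)^{-s} = ∑_{DE = J} g(D) m(E)`, so the Ramanujan series is the Dirichlet convolution
of `g` and `m` over the monoid of ideals, and by absolute convergence it equals
`(∑ g) (∑ m) = σ_{K,1-s}(I) ∑ m`. Likewise the convolution of `N^{-s}` with `m` is
`N(J)^{-s} ∑_{E ∣ J} μ(E) = [J = 1]`, since the squarefree divisors of `J` correspond to the subsets
of its prime factors; hence `ζ_K(s) ∑ m = 1`. Absolute convergence of `ζ_K(s)` for `Re s > 1`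
follows by partial summation from the number of ideals of norm `≤ x` being `O(x)`.
-/

open Filter Asymptotics UniqueFactorizationMonoid

theorem tsum_subtype_ne_eq_tsum {α E : Type*} [AddCommMonoid E] [TopologicalSpace E]
    {f : α → E} {a : α} (ha : f a = 0) : ∑' x : {x // x ≠ a}, f x = ∑' x, f x :=
  tsum_subtype_eq_of_support_subset (s := {x | x ≠ a}) fun _ hx h ↦ hx (h ▸ ha)

section MulFiber

variable {M R : Type*} [Mul M] [NormedRing R] {f g : M → R}

theorem hasSum_tsum_mulFiber_mul [CompleteSpace R] (hf : Summable fun a ↦ ‖f a‖)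
    (hg : Summable fun b ↦ ‖g b‖) :
    HasSum (fun n ↦ ∑' p : {p : M × M // p.1 * p.2 = n}, f p.1.1 * g p.1.2)
      ((∑' a, f a) * ∑' b, g b) :=
  (hf.of_norm.hasSum.mul hg.of_norm.hasSum (summable_mul_of_summable_norm hf hg)).tsum_fiberwise
    fun p ↦ p.1 * p.2

theorem summable_norm_tsum_mulFiber_mul (hf : Summable fun a ↦ ‖f a‖)
    (hg : Summable fun b ↦ ‖g b‖) :
    Summable fun n ↦ ‖∑' p : {p : M × M // p.1 * p.2 = n}, f p.1.1 * g p.1.2‖ := by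
  have hfg := hf.mul_norm hg
  refine .of_nonneg_of_le (fun _ ↦ norm_nonneg _) (fun n ↦ ?_)
    (hfg.hasSum.tsum_fiberwise fun p ↦ p.1 * p.2).summable
  exact norm_tsum_le_tsum_norm (hfg.subtype _)

end MulFiber

section Divisors

variable {α : Type*} [CommMonoidWithZero α] [IsCancelMulZero α]

noncomputable def mulFiberEquivDvd {n : α} (hn : n ≠ 0) :
    {p : α × α // p.1 * p.2 = n} ≃ {d : α // d ∣ n} :=
  Equiv.ofBijective (fun p ↦ ⟨p.1.2, Dvd.intro_left _ p.2⟩) <| by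
    refine ⟨fun ⟨⟨a, b⟩, hab⟩ ⟨⟨c, d⟩, hcd⟩ h ↦ ?_, fun ⟨d, c, hc⟩ ↦ ⟨⟨(c, d), ?_⟩, rfl⟩⟩
    · obtain rfl : b = d := congrArg Subtype.val h
      have hb : b ≠ 0 := right_ne_zero_of_mul (hab ▸ hn)
      simp only [Subtype.mk.injEq, Prod.mk.injEq, and_true]
      exact mul_right_cancel₀ hb (hab.trans hcd.symm)
    · rw [mul_comm, hc]

end Divisors

namespace UniqueFactorizationMonoid

variable {α : Type*} [CommMonoidWithZero α] [NormalizationMonoid α] [UniqueFactorizationMonoid α]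
  [Subsingleton αˣ]

theorem normalizedFactors_finsetProd_of_prime {s : Finset α} (hs : ∀ p ∈ s, Prime p) :
    normalizedFactors (∏ p ∈ s, p) = s.val := by
  rw [Finset.prod_eq_multiset_prod, Multiset.map_id']
  exact normalizedFactors_prod_of_prime hs

theorem prod_toFinset_normalizedFactors_of_squarefree [Nontrivial α] {a : α} (ha : Squarefree a) :
    ∏ p ∈ (normalizedFactors a).toFinset, p = a := by
  have ha0 := ha.ne_zero
  rw [Finset.prod_eq_multiset_prod, Multiset.map_id', Multiset.toFinset_val,
    Multiset.dedup_eq_self.mpr ((squarefree_iff_nodup_normalizedFactors ha0).mp ha)]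
  exact associated_iff_eq.mp (prod_normalizedFactors ha0)

theorem injOn_finsetProd_of_prime :
    Set.InjOn (fun s : Finset α ↦ ∏ p ∈ s, p) {s | ∀ p ∈ s, Prime p} := fun s hs t ht h ↦
  Finset.val_injective <| by
    rw [← normalizedFactors_finsetProd_of_prime hs, ← normalizedFactors_finsetProd_of_prime ht]
    exact congrArg normalizedFactors h

theorem mem_image_prod_powerset_of_squarefree_dvd [Nontrivial α] {a b : α} (ha : Squarefree a)
    (hab : a ∣ b) (hb : b ≠ 0) :
    a ∈ (normalizedFactors b).toFinset.powerset.image fun s ↦ ∏ p ∈ s, p :=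
  Finset.mem_image.mpr ⟨_, Finset.mem_powerset.mpr <| Multiset.toFinset_subset.mpr <|
    Multiset.subset_of_le <| (dvd_iff_normalizedFactors_le_normalizedFactors ha.ne_zero hb).mp hab,
    prod_toFinset_normalizedFactors_of_squarefree ha⟩

end UniqueFactorizationMonoid

namespace NumberField

theorem isBigO_sum_card_absNorm_eq :
    (fun n : ℕ ↦ ∑ k ∈ Finset.Icc 1 n, (Nat.card {I : Ideal (𝓞 K) // Ideal.absNorm I = k} : ℝ))
      =O[atTop] fun n ↦ (n : ℝ) := by
  have hcount : (fun n : ℕ ↦ (Nat.card {I : Ideal (𝓞 K) // Ideal.absNorm I ≤ n} : ℝ))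
      =O[atTop] fun n ↦ (n : ℝ) := by
    have hlim := (Ideal.tendsto_norm_le_div_atTop K).comp tendsto_natCast_atTop_atTop
    simp only [Function.comp_def, Nat.cast_le] at hlim
    refine isBigO_of_div_tendsto_nhds ?_ _ hlim
    filter_upwards [eventually_ne_atTop 0] with n hn h
    exact absurd h (Nat.cast_ne_zero.mpr hn)
  refine (isBigO_of_le _ fun n ↦ ?_).trans hcount
  rw [Real.norm_of_nonneg (by positivity), Real.norm_of_nonneg (by positivity), ← Nat.cast_sum,
    Nat.cast_le, ← Finset.card_preimage_eq_sum_card_image_eq fun k _ ↦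
      Ideal.finite_setOfPred_absNorm_eq k]
  exact Nat.card_mono (Ideal.finite_setOfPred_absNorm_le n) fun I hI ↦
    (Finset.mem_Icc.mp (Set.mem_preimage.mp hI)).2

theorem summable_absNorm_rpow_neg {σ : ℝ} (hσ : 1 < σ) :
    Summable fun J : Ideal (𝓞 K) ↦ (Ideal.absNorm J : ℝ) ^ (-σ) := by
  have hO := (isBigO_sum_card_absNorm_eq K).congr_right fun n ↦ (Real.rpow_one (n : ℝ)).symm
  have hL := LSeriesSummable_of_sum_norm_bigO_and_nonneg hO (fun _ ↦ Nat.cast_nonneg _) zero_le_one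
    (s := σ) (by simpa using hσ)
  have hσ0 : -σ ≠ 0 := by linarith
  rw [← (Equiv.sigmaFiberEquiv Ideal.absNorm).summable_iff, summable_sigma_of_nonneg
    (fun _ ↦ by simp only [Function.comp_apply]; positivity)]
  have (n : ℕ) : Fintype {J : Ideal (𝓞 K) // Ideal.absNorm J = n} :=
    (Ideal.finite_setOfPred_absNorm_eq n).fintype
  refine ⟨fun n ↦ Summable.of_finite, hL.norm.congr fun n ↦ ?_⟩
  simp only [Function.comp_apply, Equiv.sigmaFiberEquiv_apply]
  rw [tsum_congr fun J : {J : Ideal (𝓞 K) // Ideal.absNorm J = n} ↦ by rw [J.2], tsum_fintype,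
    Finset.sum_const, Finset.card_univ, nsmul_eq_mul, ← Nat.card_eq_fintype_card,
    LSeries.norm_term_eq]
  rcases eq_or_ne n 0 with rfl | hn
  · simp [Real.zero_rpow hσ0]
  · simp [hn, Real.rpow_neg (Nat.cast_nonneg n), div_eq_mul_inv]

end NumberField

section IdealSums

variable {K}

theorem idealMu_of_not_squarefree {J : Ideal (𝓞 K)} (h : ¬ Squarefree J) : idealMu K J = 0 := by
  simp [idealMu, h]

theorem norm_idealMu_le_one (J : Ideal (𝓞 K)) : ‖(idealMu K J : ℂ)‖ ≤ 1 := by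
  unfold idealMu
  split_ifs <;> simp

theorem idealMu_finsetProd_of_prime {s : Finset (Ideal (𝓞 K))} (hs : ∀ P ∈ s, Prime P) :
    idealMu K (∏ P ∈ s, P) = (-1) ^ s.card := by
  have hnf := normalizedFactors_finsetProd_of_prime hs
  have hsq : Squarefree (∏ P ∈ s, P) :=
    (squarefree_iff_nodup_normalizedFactors (Finset.prod_ne_zero_iff.mpr
      fun P hP ↦ (hs P hP).ne_zero)).mpr (hnf ▸ s.nodup)
  rw [idealMu, if_pos hsq, factors_eq_normalizedFactors, hnf, Finset.card_val]

theorem tsum_idealMu_dvd {J : Ideal (𝓞 K)} (hJ : J ≠ ⊥) :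
    ∑' D : {D // D ∣ J}, (idealMu K D : ℂ) = if J = ⊤ then 1 else 0 := by
  set Q := (normalizedFactors J).toFinset
  have hQ : ∀ E ∈ Q.powerset, ∀ P ∈ E, Prime P := fun E hE P hP ↦
    prime_of_normalized_factor P (Multiset.mem_toFinset.mp (Finset.mem_powerset.mp hE hP))
  have hdvd : ∀ E ∈ Q.powerset, ∏ P ∈ E, P ∣ J := fun E hE ↦
    Finset.prod_primes_dvd _ (hQ E hE) fun P hP ↦
      dvd_of_mem_normalizedFactors (Multiset.mem_toFinset.mp (Finset.mem_powerset.mp hE hP))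
  have hsupp : ∀ D ∉ Q.powerset.image fun E ↦ ∏ P ∈ E, P,
      {D | D ∣ J}.indicator (fun D ↦ (idealMu K D : ℂ)) D = 0 := by
    intro D hD
    by_cases hDJ : D ∣ J
    · have hsq : ¬ Squarefree D := fun hsq ↦
        hD (mem_image_prod_powerset_of_squarefree_dvd hsq hDJ hJ)
      simp [idealMu_of_not_squarefree hsq]
    · exact Set.indicator_of_notMem (show D ∉ {D | D ∣ J} from hDJ) _
  have hQJ : Q = ∅ ↔ J = ⊤ := by
    rw [Multiset.toFinset_eq_empty, normalizedFactors_eq_zero_iff hJ, Ideal.isUnit_iff]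
  calc ∑' D : {D // D ∣ J}, (idealMu K D : ℂ)
      = ∑' D, {D | D ∣ J}.indicator (fun D ↦ (idealMu K D : ℂ)) D :=
        tsum_subtype {D | D ∣ J} fun D ↦ (idealMu K D : ℂ)
    _ = ∑ D ∈ Q.powerset.image fun E ↦ ∏ P ∈ E, P,
          {D | D ∣ J}.indicator (fun D ↦ (idealMu K D : ℂ)) D := tsum_eq_sum hsupp
    _ = ∑ E ∈ Q.powerset, (((-1) ^ E.card : ℤ) : ℂ) := by
        rw [Finset.sum_image (injOn_finsetProd_of_prime.mono hQ)]
        refine Finset.sum_congr rfl fun E hE ↦ ?_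
        rw [Set.indicator_of_mem (show ∏ P ∈ E, P ∈ {D | D ∣ J} from hdvd E hE),
          idealMu_finsetProd_of_prime (hQ E hE)]
    _ = if J = ⊤ then 1 else 0 := by
        rw [← Int.cast_sum, Finset.sum_powerset_neg_one_pow_card]
        by_cases h : J = ⊤ <;> simp [h, hQJ]

variable (K) in
theorem absNorm_bot_cpow {s : ℂ} (hs : s ≠ 0) :
    (Ideal.absNorm (⊥ : Ideal (𝓞 K)) : ℂ) ^ s = 0 := by
  simp [hs]

variable (K) in
theorem summable_norm_absNorm_cpow_neg {s : ℂ} (hs : 1 < s.re) :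
    Summable fun J : Ideal (𝓞 K) ↦ ‖(Ideal.absNorm J : ℂ) ^ (-s)‖ :=
  (NumberField.summable_absNorm_rpow_neg K hs).congr fun J ↦ by
    rw [Complex.norm_natCast_cpow_of_re_ne_zero _ (Complex.re_neg_ne_zero_of_one_lt_re hs),
      Complex.neg_re]

variable (K) in
theorem summable_norm_idealMu_mul_absNorm_cpow_neg {s : ℂ} (hs : 1 < s.re) :
    Summable fun J : Ideal (𝓞 K) ↦ ‖(idealMu K J : ℂ) * (Ideal.absNorm J : ℂ) ^ (-s)‖ :=
  .of_nonneg_of_le (fun _ ↦ norm_nonneg _)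
    (fun J ↦ (norm_mul_le _ _).trans
      (mul_le_of_le_one_left (norm_nonneg _) (norm_idealMu_le_one J)))
    (summable_norm_absNorm_cpow_neg K hs)

theorem summable_norm_ite_dvd_absNorm_cpow {I : Ideal (𝓞 K)} (hI : I ≠ ⊥) (z : ℂ) :
    Summable fun D : Ideal (𝓞 K) ↦ ‖if D ∣ I then (Ideal.absNorm D : ℂ) ^ z else 0‖ := by
  have := fintypeSubtypeDvd I hI
  have hfin : {D | D ∣ I}.Finite := Set.finite_coe_iff.mp (Finite.of_fintype {D // D ∣ I})
  exact summable_of_hasFiniteSupport <| hfin.subset <| Function.support_subset_iff'.mpr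
    fun D hD ↦ by simp [show ¬ D ∣ I from hD]

theorem zetaK_eq_tsum {s : ℂ} (hs : s ≠ 0) :
    zetaK K s = ∑' J : Ideal (𝓞 K), (Ideal.absNorm J : ℂ) ^ (-s) :=
  tsum_subtype_ne_eq_tsum (f := fun J : Ideal (𝓞 K) ↦ (Ideal.absNorm J : ℂ) ^ (-s))
    (absNorm_bot_cpow K (neg_ne_zero.mpr hs))

theorem tsum_mulFiber_idealMu {J : Ideal (𝓞 K)} (hJ : J ≠ ⊥) :
    ∑' p : {p : Ideal (𝓞 K) × Ideal (𝓞 K) // p.1 * p.2 = J}, (idealMu K p.1.2 : ℂ) =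
      if J = ⊤ then 1 else 0 :=
  ((mulFiberEquivDvd hJ).tsum_eq fun D ↦ (idealMu K D : ℂ)).trans (tsum_idealMu_dvd hJ)

variable (K) in
theorem tsum_idealMu_mul_absNorm_cpow_neg {s : ℂ} (hs : 1 < s.re) :
    ∑' J : Ideal (𝓞 K), (idealMu K J : ℂ) * (Ideal.absNorm J : ℂ) ^ (-s) = (zetaK K s)⁻¹ := by
  have hs0 := Complex.ne_zero_of_one_lt_re hs
  have hfiber (J : Ideal (𝓞 K)) :
      ∑' p : {p : Ideal (𝓞 K) × Ideal (𝓞 K) // p.1 * p.2 = J}, (Ideal.absNorm p.1.1 : ℂ) ^ (-s) *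
        ((idealMu K p.1.2 : ℂ) * (Ideal.absNorm p.1.2 : ℂ) ^ (-s)) = if J = ⊤ then 1 else 0 := by
    rw [tsum_congr fun p : {p : Ideal (𝓞 K) × Ideal (𝓞 K) // p.1 * p.2 = J} ↦
      show _ = (Ideal.absNorm J : ℂ) ^ (-s) * idealMu K p.1.2 by
        obtain ⟨⟨a, b⟩, rfl⟩ := p
        rw [map_mul, Nat.cast_mul, Complex.natCast_mul_natCast_cpow]
        ring, tsum_mul_left]
    rcases eq_or_ne J ⊥ with rfl | hJ
    · rw [absNorm_bot_cpow K (neg_ne_zero.mpr hs0), zero_mul, if_neg bot_ne_top]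
    · rw [tsum_mulFiber_idealMu hJ]
      split_ifs with h
      · simp [h]
      · rw [mul_zero]
  have hprod := hasSum_tsum_mulFiber_mul (summable_norm_absNorm_cpow_neg K hs)
    (summable_norm_idealMu_mul_absNorm_cpow_neg K hs)
  rw [funext hfiber] at hprod
  rw [zetaK_eq_tsum hs0]
  exact eq_inv_of_mul_eq_one_right (hprod.unique (hasSum_ite_eq ⊤ 1))

theorem ramanujanCK_eq_tsum_mulFiber (J I : Ideal (𝓞 K)) :
    ramanujanCK K J I = ∑' p : {p : Ideal (𝓞 K) × Ideal (𝓞 K) // p.1 * p.2 = J},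
      if p.1.1 ∣ I then (Ideal.absNorm p.1.1 : ℂ) * (idealMu K p.1.2 : ℂ) else 0 := by
  rw [ramanujanCK, ← tsum_subtype_eq_of_support_subset (s := {p | p.1 * p.2 = J})]
  · exact tsum_congr fun p ↦ if_congr (and_iff_right p.2) rfl rfl
  · exact Function.support_subset_iff'.mpr fun p hp ↦ if_neg fun h ↦ hp h.1

theorem ramanujanCK_div_absNorm_cpow {I : Ideal (𝓞 K)} (hI : I ≠ ⊥) (J : Ideal (𝓞 K)) (s : ℂ) :
    ramanujanCK K J I / (Ideal.absNorm J : ℂ) ^ s =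
      ∑' p : {p : Ideal (𝓞 K) × Ideal (𝓞 K) // p.1 * p.2 = J},
        (if p.1.1 ∣ I then (Ideal.absNorm p.1.1 : ℂ) ^ (1 - s) else 0) *
          ((idealMu K p.1.2 : ℂ) * (Ideal.absNorm p.1.2 : ℂ) ^ (-s)) := by
  rw [div_eq_mul_inv, ← Complex.cpow_neg, ramanujanCK_eq_tsum_mulFiber, ← tsum_mul_right]
  refine tsum_congr fun ⟨⟨a, b⟩, hab⟩ ↦ ?_
  dsimp only
  split_ifs with ha
  · have hNa : (Ideal.absNorm a : ℂ) ≠ 0 := Nat.cast_ne_zero.mpr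
      (Ideal.absNorm_eq_zero_iff.not.mpr (ne_zero_of_dvd_ne_zero hI ha))
    rw [← hab, map_mul, Nat.cast_mul, Complex.natCast_mul_natCast_cpow, sub_eq_add_neg,
      Complex.cpow_add _ _ hNa, Complex.cpow_one]
    ring
  · simp

end IdealSums

/-- For a nonzero ideal `I` and `Re(s) > 1`, the Dirichlet series
`∑_J C_J(I)/N(J)^s` converges absolutely to `σ_{K,1−s}(I)/ζ_K(s)`. -/
theorem ramanujanCK_dirichlet_series (I : Ideal (𝓞 K)) (hI : I ≠ ⊥) (s : ℂ)
    (hs : 1 < s.re) :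
    Summable (fun J : {J : Ideal (𝓞 K) // J ≠ ⊥} =>
        ‖ramanujanCK K J.1 I / (Ideal.absNorm J.1 : ℂ) ^ s‖) ∧
      ∑' J : {J : Ideal (𝓞 K) // J ≠ ⊥},
          ramanujanCK K J.1 I / (Ideal.absNorm J.1 : ℂ) ^ s =
        sigmaK K (1 - s) I / zetaK K s := by
  have hG := summable_norm_ite_dvd_absNorm_cpow hI (1 - s)
  have hM := summable_norm_idealMu_mul_absNorm_cpow_neg K hs
  refine ⟨((summable_norm_tsum_mulFiber_mul hG hM).subtype {J | J ≠ ⊥}).congr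
    fun J ↦ by rw [ramanujanCK_div_absNorm_cpow hI]; rfl, ?_⟩
  rw [tsum_subtype_ne_eq_tsum (f := fun J ↦ ramanujanCK K J I / (Ideal.absNorm J : ℂ) ^ s)
      (by rw [absNorm_bot_cpow K (Complex.ne_zero_of_one_lt_re hs), div_zero]),
    tsum_congr (ramanujanCK_div_absNorm_cpow hI · s), (hasSum_tsum_mulFiber_mul hG hM).tsum_eq,
    tsum_idealMu_mul_absNorm_cpow_neg K hs, div_eq_mul_inv]
  rfl
end
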